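/- arXiv:1502.01779 — 2 statements merged into one kernel-verified Lean document; each statement's English description precedes it below -/
import Mathlib

section
/- For every integer j ≥ 1 and every real δ with 0 ≤ δ ≤ 1, the point (0, −1, 0) belongs both to K + (0, 0, −δ) and to K + (−w₋(j)); equivalently, (0, −1, δ) ∈ K and (0, −1, 0) + w₋(j) ∈ K. -/
open Pointwise

/-- `w₋(j) = (0, −∑_{t=1}^{j} 1/t², ∑_{t=1}^{j} 1/t³)`. -/
noncomputable def wM (j : ℕ) : Fin 3 → ℝ :=
  ![0, -(∑ t ∈ Finset.Icc 1 j, (1 : ℝ) / (t : ℝ) ^ 2),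
    ∑ t ∈ Finset.Icc 1 j, (1 : ℝ) / (t : ℝ) ^ 3]

/-- `w₊(k) = (∑_{t=1}^{k} 1/t², ∑_{t=1}^{k} 1/t³, 0)`. -/
noncomputable def wP (k : ℕ) : Fin 3 → ℝ :=
  ![∑ t ∈ Finset.Icc 1 k, (1 : ℝ) / (t : ℝ) ^ 2,
    ∑ t ∈ Finset.Icc 1 k, (1 : ℝ) / (t : ℝ) ^ 3, 0]

/-- `ζ₂ = ∑_{t=1}^{∞} 1/t²`. -/
noncomputable def zeta2 : ℝ := ∑' t : ℕ, (1 : ℝ) / ((t : ℝ) + 1) ^ 2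

/-- `ζ₃ = ∑_{t=1}^{∞} 1/t³`. -/
noncomputable def zeta3 : ℝ := ∑' t : ℕ, (1 : ℝ) / ((t : ℝ) + 1) ^ 3

/-- `u₁ = (ζ₂, −2, ζ₃)`. -/
noncomputable def uOne : Fin 3 → ℝ := ![zeta2, -2, zeta3]

/-- `u₀ = (ζ₂, −2, 0)`. -/
noncomputable def uZero : Fin 3 → ℝ := ![zeta2, -2, 0]

/-- `v(j,k) = (1/(j+1)³)·w(j,k) + (((j+1)³ − 1)/(j+1)³)·w(j,k+1)` where
`w(j,k) = w₋(j) + w₊(k)`. -/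
noncomputable def vU (j k : ℕ) : Fin 3 → ℝ :=
  ((1 : ℝ) / ((j : ℝ) + 1) ^ 3) • (wM j + wP k) +
    ((((j : ℝ) + 1) ^ 3 - 1) / ((j : ℝ) + 1) ^ 3) • (wM j + wP (k + 1))

/-- The universal convex body `K`: the closure of the convex hull of the points
`w₋(j)`, `v(j,k)`, `u₀ − w₊(k)` and `u₁ − w₊(k)`. -/
noncomputable def KU : Set (Fin 3 → ℝ) :=
  closure (convexHull ℝ
    (Set.range wM ∪ (⋃ j : ℕ, Set.range (vU j)) ∪
     Set.range (fun k => uZero - wP k) ∪ Set.range (fun k => uOne - wP k)))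

/-! Everything happens in the plane `x = 0`. Besides the points `w₋(j) = (0, −a, b)`, with
`a ≤ 2` and `0 ≤ b ≤ ζ₃`, the closed convex set `K` contains the limits `(0, −2 − ζ₃, 0)` and
`(0, −2 − ζ₃, ζ₃)` of `u₀ − w₊(k)` and `u₁ − w₊(k)`, hence the segment between them. Since
`ζ₃ ≥ 1`, going down from `w₋(j)` towards that segment passes through
`(0, −1 − a, b) = (0, −1, 0) + w₋(j)`. For `j = 0` this is `(0, −1, 0)`, and `(0, −1, δ)` lies
between it and `w₋(1) = (0, −1, 1)`. -/

open Filter Topology Finset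

lemma sum_Icc_one_div_pow_eq_sum_range (p k : ℕ) :
    ∑ t ∈ Icc 1 k, (1 : ℝ) / (t : ℝ) ^ p = ∑ t ∈ range k, (1 : ℝ) / ((t : ℝ) + 1) ^ p := by
  rw [← Ico_add_one_right_eq_Icc, sum_Ico_eq_sum_range, Nat.add_sub_cancel]
  exact sum_congr rfl fun t _ ↦ by push_cast; ring

lemma tendsto_sum_Icc_one_div_pow {p : ℕ} (hp : 1 < p) :
    Tendsto (fun k : ℕ ↦ ∑ t ∈ Icc 1 k, (1 : ℝ) / (t : ℝ) ^ p) atTop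
      (𝓝 (∑' t : ℕ, (1 : ℝ) / ((t : ℝ) + 1) ^ p)) := by
  have hsum : Summable fun t : ℕ ↦ (1 : ℝ) / ((t : ℝ) + 1) ^ p := by
    simpa using (summable_nat_add_iff 1).mpr (Real.summable_one_div_nat_pow.mpr hp)
  simpa only [sum_Icc_one_div_pow_eq_sum_range] using hsum.hasSum.tendsto_sum_nat

lemma sum_Icc_one_div_pow_le_tsum {p : ℕ} (hp : 1 < p) (k : ℕ) :
    ∑ t ∈ Icc 1 k, (1 : ℝ) / (t : ℝ) ^ p ≤ ∑' t : ℕ, (1 : ℝ) / ((t : ℝ) + 1) ^ p := by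
  refine Monotone.ge_of_tendsto (fun m n hmn ↦ ?_) (tendsto_sum_Icc_one_div_pow hp) k
  exact sum_le_sum_of_subset_of_nonneg (Icc_subset_Icc_right hmn) fun _ _ _ ↦ by positivity

lemma sum_Icc_one_div_sq_le_two (k : ℕ) : ∑ t ∈ Icc 1 k, (1 : ℝ) / (t : ℝ) ^ 2 ≤ 2 := by
  have hIcc : Icc 1 k = Ioo 0 (k + 1) := by ext; simp; omega
  simpa [hIcc] using sum_Ioo_inv_sq_le (α := ℝ) 0 (k + 1)

lemma one_le_zeta3 : 1 ≤ zeta3 := by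
  simpa [zeta3] using sum_Icc_one_div_pow_le_tsum (p := 3) (by norm_num) 1

lemma tendsto_wP : Tendsto wP atTop (𝓝 ![zeta2, zeta3, 0]) := by
  refine tendsto_pi_nhds.2 fun i ↦ ?_
  fin_cases i
  · exact tendsto_sum_Icc_one_div_pow (by norm_num)
  · exact tendsto_sum_Icc_one_div_pow (by norm_num)
  · exact tendsto_const_nhds

lemma Convex.mem_of_update_mem {ι : Type*} [DecidableEq ι] {s : Set (ι → ℝ)} (hs : Convex ℝ s)
    {x : ι → ℝ} {i : ι} {a b c : ℝ} (ha : Function.update x i a ∈ s)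
    (hb : Function.update x i b ∈ s) (hc : c ∈ Set.Icc a b) : Function.update x i c ∈ s := by
  have hline : Convex ℝ {t : ℝ | Function.update x i t ∈ s} := by
    intro t₁ h₁ t₂ h₂ μ ν hμ hν hμν
    have hupdate : Function.update x i (μ • t₁ + ν • t₂) =
        μ • Function.update x i t₁ + ν • Function.update x i t₂ := by
      ext k
      rcases eq_or_ne k i with rfl | hk
      · simp
      · simp [hk, ← add_mul, hμν]
    simpa only [Set.mem_ofPred_eq, hupdate] using hs h₁ h₂ hμ hν hμν
  exact hline.ordConnected.out ha hb hc

lemma update_vec3_one (x y z w : ℝ) : Function.update ![x, y, z] 1 w = ![x, w, z] := by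
  ext i; fin_cases i <;> rfl

lemma update_vec3_two (x y z w : ℝ) : Function.update ![x, y, z] 2 w = ![x, y, w] := by
  ext i; fin_cases i <;> rfl

namespace KU

lemma convex : Convex ℝ KU := (convex_convexHull ℝ _).closure

lemma wM_mem (j : ℕ) : wM j ∈ KU :=
  subset_closure (subset_convexHull ℝ _ (Or.inl (Or.inl (Or.inl ⟨j, rfl⟩))))

lemma sub_lim_wP_mem {u : Fin 3 → ℝ} (hu : ∀ k, u - wP k ∈ KU) : u - ![zeta2, zeta3, 0] ∈ KU :=
  isClosed_closure.mem_of_tendsto (tendsto_const_nhds.sub tendsto_wP) (.of_forall hu)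

lemma mem_of_snd_mem {x z y₁ y₂ y : ℝ} (h₁ : ![x, y₁, z] ∈ KU) (h₂ : ![x, y₂, z] ∈ KU)
    (hy : y ∈ Set.Icc y₁ y₂) : ![x, y, z] ∈ KU := by
  simpa only [update_vec3_one] using convex.mem_of_update_mem (x := ![x, 0, z]) (i := 1)
    (by rwa [update_vec3_one]) (by rwa [update_vec3_one]) hy

lemma mem_of_thd_mem {x y z₁ z₂ z : ℝ} (h₁ : ![x, y, z₁] ∈ KU) (h₂ : ![x, y, z₂] ∈ KU)
    (hz : z ∈ Set.Icc z₁ z₂) : ![x, y, z] ∈ KU := by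
  simpa only [update_vec3_two] using convex.mem_of_update_mem (x := ![x, y, 0]) (i := 2)
    (by rwa [update_vec3_two]) (by rwa [update_vec3_two]) hz

lemma bottom_edge_mem {c : ℝ} (hc : c ∈ Set.Icc 0 zeta3) : ![0, -2 - zeta3, c] ∈ KU := by
  have h₀ : uZero - ![zeta2, zeta3, 0] ∈ KU :=
    sub_lim_wP_mem fun k ↦ subset_closure (subset_convexHull ℝ _ (Or.inl (Or.inr ⟨k, rfl⟩)))
  have h₁ : uOne - ![zeta2, zeta3, 0] ∈ KU :=
    sub_lim_wP_mem fun k ↦ subset_closure (subset_convexHull ℝ _ (Or.inr ⟨k, rfl⟩))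
  have e₀ : uZero - ![zeta2, zeta3, 0] = ![0, -2 - zeta3, 0] := by
    ext i; fin_cases i <;> simp [uZero]
  have e₁ : uOne - ![zeta2, zeta3, 0] = ![0, -2 - zeta3, zeta3] := by
    ext i; fin_cases i <;> simp [uOne]
  exact mem_of_thd_mem (e₀ ▸ h₀) (e₁ ▸ h₁) hc

lemma add_wM_mem (j : ℕ) : ![0, -1, 0] + wM j ∈ KU := by
  set a := ∑ t ∈ Icc 1 j, (1 : ℝ) / (t : ℝ) ^ 2
  set b := ∑ t ∈ Icc 1 j, (1 : ℝ) / (t : ℝ) ^ 3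
  have ha : a ≤ 2 := sum_Icc_one_div_sq_le_two j
  have hb : b ∈ Set.Icc 0 zeta3 :=
    ⟨sum_nonneg fun _ _ ↦ by positivity, sum_Icc_one_div_pow_le_tsum (by norm_num) j⟩
  have hpoint : ![0, -1, 0] + wM j = ![0, -1 - a, b] := by
    ext i; fin_cases i <;> simp [wM, a, b]; ring
  rw [hpoint]
  refine mem_of_snd_mem (y₂ := -a) (bottom_edge_mem hb) (wM_mem j) ⟨?_, by linarith⟩
  linarith [one_le_zeta3]

end KU

theorem witness_A_B_general (j : ℕ) (δ : ℝ) (h0 : 0 ≤ δ) (h1 : δ ≤ 1) :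
    (![(0 : ℝ), -1, 0] ∈ ![(0 : ℝ), 0, -δ] +ᵥ KU ∧
      ![(0 : ℝ), -1, 0] ∈ (-(wM j)) +ᵥ KU) ∧
    (![(0 : ℝ), -1, δ] ∈ KU ∧ ![(0 : ℝ), -1, 0] + wM j ∈ KU) := by
  have hwM₀ : ![(0 : ℝ), -1, 0] + wM 0 = ![0, -1, 0] := by simp [wM]
  have hwM₁ : wM 1 = ![0, -1, 1] := by norm_num [wM]
  have hδ : ![(0 : ℝ), -1, δ] ∈ KU :=
    KU.mem_of_thd_mem (hwM₀ ▸ KU.add_wM_mem 0) (hwM₁ ▸ KU.wM_mem 1) ⟨h0, h1⟩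
  refine ⟨⟨?_, ?_⟩, hδ, KU.add_wM_mem j⟩
  · rw [Set.mem_vadd_set_iff_neg_vadd_mem]
    convert hδ using 1
    ext i; fin_cases i <;> simp
  · rw [Set.mem_vadd_set_iff_neg_vadd_mem, neg_neg, vadd_eq_add, add_comm]
    exact KU.add_wM_mem j

/-- **Witness point for `⋂ A_i ∩ ⋂ B_j`.** For every `j ≥ 1` and `0 ≤ δ ≤ 1`, the
point `(0, −1, 0)` lies both in `K + (0,0,−δ)` and in `K + (−w₋(j))`;
equivalently, `(0, −1, δ) ∈ K` and `(0, −1, 0) + w₋(j) ∈ K`. -/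
theorem witness_A_B (j : ℕ) (hj : 1 ≤ j) (δ : ℝ) (h0 : 0 ≤ δ) (h1 : δ ≤ 1) :
    (![(0 : ℝ), -1, 0] ∈ ![(0 : ℝ), 0, -δ] +ᵥ KU ∧
      ![(0 : ℝ), -1, 0] ∈ (-(wM j)) +ᵥ KU) ∧
    (![(0 : ℝ), -1, δ] ∈ KU ∧ ![(0 : ℝ), -1, 0] + wM j ∈ KU) :=
  witness_A_B_general j δ h0 h1
end

section
/- For every positive integer m there exists ε₀ > 0 such that for every δ with 0 < δ < ε₀ and every k ∈ {1, …, m}: (K + (0, 0, −δ)) ∩ (K + (w₊(k) + w₊(k+1) − u₁)) = {x + (0, 0, −δ) : x ∈ segment [w₊(k), w₊(k+1)]}; that is, the translate A of K by (0,0,−δ) meets the translate C_k exactly in the translated edge E_k + (0,0,−δ). -/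
open Pointwise

/-!
Three families of half-spaces contain `K`: `0 ≤ x₂`; `m_s + x₂ ≤ x₀ - s x₁` for `s ≥ 1`; and
`x₀ - s x₁ ≤ ζ₂ + 2s - m_s`, where `m_s = min_l (w₊(l)₀ - s w₊(l)₁)` is attained at `l = s`
(the increments `(l + 1 - s)/(l + 1)³` change sign there), and for `s = k + 1` also at `l = k`.
If `p = x + (0,0,δ)` and `q = x - (w₊(k) + w₊(k+1) - u₁)` both lie in `K`, comparing the third
inequality at `q` with the second at `p` for `s = k + 1` forces `p₂ = 0` and
`p₀ - (k+1) p₁ = m_{k+1}`; the slopes `k` and `k + 2` then confine `p` to the edge `E_k`.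
Conversely, for `δ ≤ ζ₃` the point `u₁ - (0,0,δ) - w₊(l)` lies on the segment
`[u₁ - w₊(l), u₀ - w₊(l)] ⊆ K`, and reflecting `E_k` through its midpoint gives the other
inclusion with `ε₀ = ζ₃`.
-/

open Finset

theorem sum_Ioc_le_sum_Ioc_of_sign_change {M : Type*} [AddCommMonoid M] [PartialOrder M]
    [IsOrderedAddMonoid M] {f : ℕ → M} {m s : ℕ} (hms : m ≤ s)
    (hneg : ∀ t, m < t → t ≤ s → f t ≤ 0) (hpos : ∀ t, s < t → 0 ≤ f t) {l : ℕ} (hml : m ≤ l) :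
    ∑ t ∈ Ioc m s, f t ≤ ∑ t ∈ Ioc m l, f t := by
  rcases le_total s l with hsl | hls
  · rw [← sum_Ioc_consecutive f hms hsl]
    exact le_add_of_nonneg_right (sum_nonneg fun t ht => hpos t (mem_Ioc.1 ht).1)
  · rw [← sum_Ioc_consecutive f hml hls]
    exact add_le_of_nonpos_right
      (sum_nonpos fun t ht => hneg t ((hml.trans_lt (mem_Ioc.1 ht).1)) (mem_Ioc.1 ht).2)

noncomputable def powSum (p l : ℕ) : ℝ := ∑ t ∈ Icc 1 l, (1 : ℝ) / (t : ℝ) ^ p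

theorem wM_eq (j : ℕ) : wM j = ![0, -powSum 2 j, powSum 3 j] := rfl

theorem wP_eq (l : ℕ) : wP l = ![powSum 2 l, powSum 3 l, 0] := rfl

theorem powSum_zero (p : ℕ) : powSum p 0 = 0 := by simp [powSum]

theorem powSum_succ (p l : ℕ) : powSum p (l + 1) = powSum p l + 1 / ((l : ℝ) + 1) ^ p := by
  rw [powSum, powSum, sum_Icc_succ_top (by omega)]
  push_cast; rfl

theorem powSum_nonneg (p l : ℕ) : 0 ≤ powSum p l :=
  sum_nonneg fun _ _ => by positivity

theorem powSum_succ_le (p l : ℕ) : powSum (p + 1) l ≤ powSum p l :=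
  sum_le_sum fun t ht => by
    have ht : (1 : ℝ) ≤ t := by exact_mod_cast (mem_Icc.1 ht).1
    exact one_div_le_one_div_of_le (by positivity) (pow_le_pow_right₀ ht p.le_succ)

theorem powSum_two_le_two (l : ℕ) : powSum 2 l ≤ 2 := by
  calc powSum 2 l = ∑ i ∈ Ioo 0 (l + 1), ((i : ℝ) ^ 2)⁻¹ := by simp only [powSum, one_div]; rfl
    _ ≤ 2 := by simpa using sum_Ioo_inv_sq_le (α := ℝ) 0 (l + 1)

theorem powSum_eq_sum_range (p l : ℕ) :
    powSum p l = ∑ t ∈ range l, (1 : ℝ) / ((t : ℝ) + 1) ^ p := by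
  induction l with
  | zero => simp [powSum_zero]
  | succ l ih => rw [powSum_succ, sum_range_succ, ih]

theorem summable_one_div_nat_add_one_pow {p : ℕ} (hp : 1 < p) :
    Summable fun t : ℕ => (1 : ℝ) / ((t : ℝ) + 1) ^ p := by
  have h := (summable_nat_add_iff 1).mpr (Real.summable_one_div_nat_pow.mpr hp)
  exact h.congr fun t => by push_cast; rfl

theorem powSum_le_tsum {p : ℕ} (hp : 1 < p) (l : ℕ) :
    powSum p l ≤ ∑' t : ℕ, (1 : ℝ) / ((t : ℝ) + 1) ^ p := by
  rw [powSum_eq_sum_range]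
  exact (summable_one_div_nat_add_one_pow hp).sum_le_tsum _ fun _ _ => by positivity

theorem powSum_le_zeta2 (l : ℕ) : powSum 2 l ≤ zeta2 := powSum_le_tsum one_lt_two l

theorem zeta3_pos : 0 < zeta3 :=
  (by norm_num [powSum] : (0 : ℝ) < powSum 3 1).trans_le (powSum_le_tsum (by norm_num) 1)

theorem zeta3_le_two : zeta3 ≤ 2 :=
  Real.tsum_le_of_sum_range_le (fun _ => by positivity) fun l => by
    rw [← powSum_eq_sum_range]
    exact (powSum_succ_le 2 l).trans (powSum_two_le_two l)

noncomputable def slopeForm (s : ℕ) : (Fin 3 → ℝ) →ₗ[ℝ] ℝ :=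
  LinearMap.proj 0 - (s : ℝ) • LinearMap.proj 1

@[simp]
theorem slopeForm_apply (s : ℕ) (x : Fin 3 → ℝ) : slopeForm s x = x 0 - s * x 1 := rfl

theorem slopeForm_wP (s l : ℕ) :
    slopeForm s (wP l) = ∑ t ∈ Ioc 0 l, (1 / (t : ℝ) ^ 2 - s / (t : ℝ) ^ 3) := by
  simp only [slopeForm_apply, wP_eq, Matrix.cons_val_zero, Matrix.cons_val_one, powSum, mul_sum,
    mul_one_div, ← sum_sub_distrib]
  rfl

theorem slopeForm_wP_self_le (s l : ℕ) : slopeForm s (wP s) ≤ slopeForm s (wP l) := by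
  have hsign : ∀ t : ℕ, 0 < t →
      1 / (t : ℝ) ^ 2 - s / (t : ℝ) ^ 3 = ((t : ℝ) - s) / (t : ℝ) ^ 3 := fun t ht => by
    field_simp
  rw [slopeForm_wP, slopeForm_wP]
  refine sum_Ioc_le_sum_Ioc_of_sign_change s.zero_le (fun t ht hts => ?_) (fun t hst => ?_)
    l.zero_le
  · rw [hsign t ht]
    exact div_nonpos_of_nonpos_of_nonneg (sub_nonpos.2 (by exact_mod_cast hts)) (by positivity)
  · rw [hsign t (by omega)]
    exact div_nonneg (sub_nonneg.2 (by exact_mod_cast hst.le)) (by positivity)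

theorem slopeForm_wP_self_nonpos (s : ℕ) : slopeForm s (wP s) ≤ 0 :=
  (slopeForm_wP_self_le s 0).trans_eq (by rw [slopeForm_wP]; simp)

theorem slopeForm_succ_wP_succ (l : ℕ) :
    slopeForm (l + 1) (wP (l + 1)) = slopeForm (l + 1) (wP l) := by
  rw [slopeForm_wP, slopeForm_wP, sum_Ioc_succ_top l.zero_le, add_eq_left]
  field_simp
  ring

theorem convex_KU : Convex ℝ KU := (convex_convexHull ℝ _).closure

theorem uZero_sub_wP_mem_KU (l : ℕ) : uZero - wP l ∈ KU :=
  subset_closure (subset_convexHull ℝ _ (Or.inl (Or.inr ⟨l, rfl⟩)))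

theorem uOne_sub_wP_mem_KU (l : ℕ) : uOne - wP l ∈ KU :=
  subset_closure (subset_convexHull ℝ _ (Or.inr ⟨l, rfl⟩))

theorem wP_mem_KU (l : ℕ) : wP l ∈ KU := by
  have h : vU 0 l = wP l := by
    ext i
    fin_cases i <;> simp [vU, wM_eq, wP_eq, powSum_zero]
  exact h ▸ subset_closure (subset_convexHull ℝ _ (Or.inl (Or.inl (Or.inr ⟨_, ⟨0, rfl⟩, l, rfl⟩))))

theorem le_apply_of_mem_KU (f : (Fin 3 → ℝ) →ₗ[ℝ] ℝ) (c : ℝ) (hwM : ∀ j, c ≤ f (wM j))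
    (hw : ∀ j l, c ≤ f (wM j + wP l)) (hu0 : ∀ l, c ≤ f (uZero - wP l))
    (hu1 : ∀ l, c ≤ f (uOne - wP l)) {x : Fin 3 → ℝ} (hx : x ∈ KU) : c ≤ f x := by
  have hconv : Convex ℝ {y | c ≤ f y} := convex_halfSpace_ge f.isLinear c
  have hclosed : IsClosed {y | c ≤ f y} :=
    isClosed_le continuous_const (LinearMap.continuous_of_finiteDimensional f)
  refine closure_minimal (convexHull_min ?_ hconv) hclosed hx
  rintro y (((⟨j, rfl⟩ | ⟨_, ⟨j, rfl⟩, l, rfl⟩) | ⟨l, rfl⟩) | ⟨l, rfl⟩)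
  · exact hwM j
  · have hj : (1 : ℝ) ≤ ((j : ℝ) + 1) ^ 3 := one_le_pow₀ (by linarith [j.cast_nonneg (α := ℝ)])
    exact hconv (hw j l) (hw j (l + 1)) (by positivity) (div_nonneg (by linarith) (by positivity))
      (by field_simp; ring)
  · exact hu0 l
  · exact hu1 l

theorem apply_two_nonneg_of_mem_KU {x : Fin 3 → ℝ} (hx : x ∈ KU) : 0 ≤ x 2 := by
  refine le_apply_of_mem_KU (LinearMap.proj 2) 0 (fun j => ?_) (fun j l => ?_) (fun l => ?_)
    (fun l => ?_) hx <;>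
    simp [wM_eq, wP_eq, uZero, uOne, powSum_nonneg, zeta3_pos.le]

theorem slopeForm_wP_self_add_le_of_mem_KU {s : ℕ} (hs : 1 ≤ s) {x : Fin 3 → ℝ} (hx : x ∈ KU) :
    slopeForm s (wP s) + x 2 ≤ slopeForm s x := by
  have hs' : (1 : ℝ) ≤ s := by exact_mod_cast hs
  have hmin := slopeForm_wP_self_le s
  have hneg := slopeForm_wP_self_nonpos s
  have h32 : ∀ j, powSum 3 j ≤ s * powSum 2 j := fun j => by
    nlinarith [powSum_succ_le 2 j, powSum_nonneg 2 j]
  have h := le_apply_of_mem_KU (slopeForm s - LinearMap.proj 2) (slopeForm s (wP s))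
    (fun j => ?_) (fun j l => ?_) (fun l => ?_) (fun l => ?_) hx
  · simp only [LinearMap.sub_apply, LinearMap.coe_proj, Function.eval] at h
    linarith
  all_goals
    simp only [slopeForm_apply, wP_eq] at hmin hneg
    simp [wM_eq, wP_eq, uZero, uOne] at hmin hneg ⊢
  · nlinarith [h32 j]
  · nlinarith [h32 j, hmin l]
  · nlinarith [powSum_le_zeta2 l, powSum_nonneg 3 l]
  · nlinarith [powSum_le_zeta2 l, powSum_nonneg 3 l, zeta3_le_two]

theorem slopeForm_le_of_mem_KU (s : ℕ) {x : Fin 3 → ℝ} (hx : x ∈ KU) :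
    slopeForm s x ≤ zeta2 + 2 * s - slopeForm s (wP s) := by
  have hmin := slopeForm_wP_self_le s
  have hneg := slopeForm_wP_self_nonpos s
  have hζ : 0 ≤ zeta2 := (powSum_nonneg 2 0).trans (powSum_le_zeta2 0)
  have h2s : ∀ j, s * powSum 2 j ≤ 2 * s := fun j =>
    by nlinarith [powSum_two_le_two j, s.cast_nonneg (α := ℝ)]
  have h := le_apply_of_mem_KU (-slopeForm s) (-(zeta2 + 2 * s - slopeForm s (wP s)))
    (fun j => ?_) (fun j l => ?_) (fun l => ?_) (fun l => ?_) hx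
  · simp only [LinearMap.neg_apply] at h
    linarith
  all_goals
    simp only [slopeForm_apply, wP_eq] at hmin hneg
    simp [wM_eq, wP_eq, uZero, uOne] at hmin hneg ⊢
  · nlinarith [h2s j]
  · nlinarith [h2s j, powSum_le_zeta2 l, powSum_nonneg 3 l, s.cast_nonneg (α := ℝ)]
  · nlinarith [hmin l]
  · nlinarith [hmin l]

theorem mem_segment_wP_of_slopeForm {k : ℕ} {p : Fin 3 → ℝ} (h2 : p 2 = 0)
    (hk : slopeForm k (wP k) ≤ slopeForm k p)
    (hk1 : slopeForm (k + 1) p = slopeForm (k + 1) (wP k))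
    (hk2 : slopeForm (k + 2) (wP (k + 1)) ≤ slopeForm (k + 2) p) :
    p ∈ segment ℝ (wP k) (wP (k + 1)) := by
  simp only [slopeForm_apply, wP_eq, powSum_succ, Matrix.cons_val_zero, Matrix.cons_val_one]
    at hk hk1 hk2
  push_cast at hk hk1 hk2
  set d := p 1 - powSum 3 k
  have hd0 : p 0 - powSum 2 k = (k + 1) * d := by linarith
  have hN2 : 1 / ((k : ℝ) + 1) ^ 2 - (k + 2) * (1 / ((k : ℝ) + 1) ^ 3) =
      -(1 / ((k : ℝ) + 1) ^ 3) := by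
    field_simp
    ring
  have hd_nonneg : 0 ≤ d := by nlinarith
  have hd_le : d ≤ 1 / ((k : ℝ) + 1) ^ 3 := by nlinarith
  refine ⟨1 - d * (k + 1) ^ 3, d * (k + 1) ^ 3, ?_, by positivity, by ring, ?_⟩
  · rw [le_div_iff₀ (by positivity)] at hd_le
    linarith
  ext i
  fin_cases i
  · simp [wP_eq, powSum_succ]
    field_simp
    linarith
  · simp [wP_eq, powSum_succ]
    field_simp
    linarith
  · simp [wP_eq, h2]

theorem mem_segment_wP_of_mem_KU {k : ℕ} (hk : 1 ≤ k) {p q : Fin 3 → ℝ} (hp : p ∈ KU) (hq : q ∈ KU)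
    (hpq : slopeForm (k + 1) (p - q) = slopeForm (k + 1) (wP k + wP (k + 1) - uOne)) :
    p ∈ segment ℝ (wP k) (wP (k + 1)) := by
  have htie := slopeForm_succ_wP_succ k
  have hc : slopeForm (k + 1) (wP k + wP (k + 1) - uOne) =
      2 * slopeForm (k + 1) (wP k) - zeta2 - 2 * (k + 1) := by
    rw [map_sub, map_add, htie]
    simp [uOne]
    ring
  have hlow := slopeForm_wP_self_add_le_of_mem_KU (Nat.le_add_left 1 k) hp
  have hup := slopeForm_le_of_mem_KU (k + 1) hq
  have hz := apply_two_nonneg_of_mem_KU hp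
  rw [map_sub, hc] at hpq
  push_cast at hup
  have h2 : p 2 = 0 := by linarith
  refine mem_segment_wP_of_slopeForm h2 ?_ (by linarith) ?_
  · linarith [slopeForm_wP_self_add_le_of_mem_KU hk hp]
  · rw [← slopeForm_succ_wP_succ (k + 1)]
    linarith [slopeForm_wP_self_add_le_of_mem_KU (le_add_self : 1 ≤ k + 2) hp]

theorem add_uOne_sub_wP_mem_KU {δ : ℝ} (hδ0 : 0 ≤ δ) (hδ : δ ≤ zeta3) (l : ℕ) :
    ![0, 0, -δ] + (uOne - wP l) ∈ KU := by
  have hζ := zeta3_pos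
  convert convex_KU (uOne_sub_wP_mem_KU l) (uZero_sub_wP_mem_KU l)
    (sub_nonneg.2 ((div_le_one hζ).2 hδ)) (div_nonneg hδ0 hζ.le) (sub_add_cancel 1 _) using 1
  ext i
  fin_cases i <;> simp [uOne, uZero, wP_eq] <;> field_simp <;> ring

theorem neg_add_add_mem_KU_of_mem_segment {δ : ℝ} (hδ0 : 0 ≤ δ) (hδ : δ ≤ zeta3) {k l : ℕ}
    {y : Fin 3 → ℝ} (hy : y ∈ segment ℝ (wP k) (wP l)) :
    -(wP k + wP l - uOne) + (![0, 0, -δ] + y) ∈ KU := by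
  obtain ⟨a, b, ha, hb, hab, rfl⟩ := hy
  obtain rfl := eq_sub_of_add_eq hab
  convert convex_KU (add_uOne_sub_wP_mem_KU hδ0 hδ l)
    (add_uOne_sub_wP_mem_KU hδ0 hδ k) ha hb hab using 1
  module

theorem A_inter_Ck_is_edge_general (m : ℕ) :
    ∃ ε₀ : ℝ, 0 < ε₀ ∧ ∀ δ : ℝ, 0 < δ → δ < ε₀ →
      ∀ k : ℕ, 1 ≤ k → k ≤ m →
        (![(0 : ℝ), 0, -δ] +ᵥ KU) ∩ ((wP k + wP (k + 1) - uOne) +ᵥ KU) =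
          ![(0 : ℝ), 0, -δ] +ᵥ segment ℝ (wP k) (wP (k + 1)) := by
  refine ⟨zeta3, zeta3_pos, fun δ hδ hδζ k hk _ => ?_⟩
  ext x
  simp only [Set.mem_inter_iff, Set.mem_vadd_set_iff_neg_vadd_mem, vadd_eq_add]
  constructor
  · rintro ⟨hp, hq⟩
    refine mem_segment_wP_of_mem_KU hk hp hq ?_
    rw [show -![0, 0, -δ] + x - (-(wP k + wP (k + 1) - uOne) + x) =
      wP k + wP (k + 1) - uOne - ![0, 0, -δ] by abel, map_sub]
    simp
  · intro hy
    refine ⟨convex_KU.segment_subset (wP_mem_KU k) (wP_mem_KU (k + 1)) hy, ?_⟩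
    simpa only [add_neg_cancel_left] using neg_add_add_mem_KU_of_mem_segment hδ.le hδζ.le hy

/-- **Lemma (intersection `A ∩ C_k` is a segment).** For every positive integer
`m` there is `ε₀ > 0` such that for every `0 < δ < ε₀` and every `k ∈ {1, …, m}`,
the translate of `K` by `(0,0,−δ)` meets the translate of `K` by
`w₊(k) + w₊(k+1) − u₁` exactly in the translated edge
`E_k + (0,0,−δ) = segment [w₊(k), w₊(k+1)] + (0,0,−δ)`. -/
theorem A_inter_Ck_is_edge (m : ℕ) (hm : 0 < m) :
    ∃ ε₀ : ℝ, 0 < ε₀ ∧ ∀ δ : ℝ, 0 < δ → δ < ε₀ →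
      ∀ k : ℕ, 1 ≤ k → k ≤ m →
        (![(0 : ℝ), 0, -δ] +ᵥ KU) ∩ ((wP k + wP (k + 1) - uOne) +ᵥ KU) =
          ![(0 : ℝ), 0, -δ] +ᵥ segment ℝ (wP k) (wP (k + 1)) :=
  A_inter_Ck_is_edge_general m
end
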